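/- arXiv:math/0605170 — 2 statements merged into one kernel-verified Lean document; each statement's English description precedes it below -/
import Mathlib

section
/- Let E be a nonzero effective divisor on C. Let R_E be the ring of rational functions on C regular in a neighborhood of the support of E, and let I_E ⊆ R_E be the ideal of functions vanishing to order at least E (i.e., with order of vanishing at each point of supp E at least the coefficient of E at that point). Then there exists a k-linear functional σ : R_E → k factoring through the quotient R_E/I_E such that the induced k-bilinear map (a mod I_E, b mod I_E) ↦ σ(ab) : R_E/I_E × R_E/I_E → k is a perfect pairing of (deg E)-dimensional k-vector spaces. -/
/-- All 2×2 minors of a matrix vanish, i.e. the matrix has rank at most 1. -/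
def MinorsVanish {R : Type} [CommRing R] {m n : Type} (M : Matrix m n R) : Prop :=
  ∀ i i' j j', M i j * M i' j' = M i j' * M i' j

/-- A matrix is `k`-general if some row and some column each consist of
`k`-linearly independent entries. -/
def KGeneral (k : Type) [Field k] {V : Type} [AddCommMonoid V] [Module k V]
    {m n : Type} (M : Matrix m n V) : Prop :=
  (∃ i, LinearIndependent k fun j => M i j) ∧ ∃ j, LinearIndependent k fun i => M i j

/-- Two matrices over a `k`-algebra are `k`-equivalent if `Y = Φ X Ψ` for some
invertible square matrices `Φ`, `Ψ` with entries in `k`. -/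
def KEquivalent (k : Type) [Field k] {A : Type} [CommRing A] [Algebra k A]
    {m n : Type} [Fintype m] [Fintype n] [DecidableEq m] [DecidableEq n]
    (X Y : Matrix m n A) : Prop :=
  ∃ (Φ : Matrix m m k) (Ψ : Matrix n n k), IsUnit Φ.det ∧ IsUnit Ψ.det ∧
    Y = Φ.map (algebraMap k A) * X * Ψ.map (algebraMap k A)

/-- An abstraction of a nonsingular projective curve `C` of genus `g` over an
algebraically closed field `k`, packaged together with its function field `F = k(C)`,
the divisor `div f` of a nonzero rational function (divisors are finitely supported
`ℤ`-valued functions on the points of `C`), the Riemann–Roch spaces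
`L(D) = {f : f = 0 ∨ div f + D ≥ 0}`, the rings `R_E` of functions regular near the
support of a divisor and the ideals `I_E` of functions vanishing to order at least `E`,
subject to the standard facts about them (including the Riemann–Roch theorem). -/
structure AbstractCurve (k : Type) [Field k] : Type 1 where
  /-- the points of the curve -/
  Point : Type
  /-- the function field `k(C)` -/
  F : Type
  [fieldF : Field F]
  [algF : Algebra k F]
  /-- the genus of the curve -/
  genus : ℕ
  /-- `divOf f` is the divisor of zeros and poles of `f` (junk value `0` at `f = 0`);
  its value at a point `p` is the order of vanishing of `f` at `p`. -/
  divOf : F → (Point →₀ ℤ)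
  divOf_mul : ∀ f g : F, f ≠ 0 → g ≠ 0 → divOf (f * g) = divOf f + divOf g
  divOf_algebraMap : ∀ c : k, c ≠ 0 → divOf (algebraMap k F c) = 0
  divOf_eq_zero_iff : ∀ f : F, f ≠ 0 →
    (divOf f = 0 ↔ ∃ c : k, c ≠ 0 ∧ f = algebraMap k F c)
  /-- a principal divisor has degree zero -/
  deg_divOf : ∀ f : F, f ≠ 0 → (divOf f).sum (fun _ n => n) = 0
  /-- the Riemann–Roch space `L(D)` as a `k`-subspace of the function field -/
  RR : (Point →₀ ℤ) → Submodule k F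
  mem_RR : ∀ (D : Point →₀ ℤ) (f : F), f ∈ RR D ↔ f = 0 ∨ 0 ≤ divOf f + D
  finite_RR : ∀ D : Point →₀ ℤ, Module.Finite k (RR D)
  /-- the Riemann–Roch theorem: `ℓ(D) = deg D - g + 1` whenever `deg D > 2g - 2` -/
  rank_RR : ∀ D : Point →₀ ℤ, 2 * (genus : ℤ) - 2 < D.sum (fun _ n => n) →
    (Module.finrank k (RR D) : ℤ) = D.sum (fun _ n => n) - genus + 1
  /-- the `k`-space `R_E` of functions regular in a neighborhood of the support of `E` -/
  Reg : (Point →₀ ℤ) → Submodule k F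
  mem_Reg : ∀ (E : Point →₀ ℤ) (f : F),
    f ∈ Reg E ↔ f = 0 ∨ ∀ p ∈ E.support, 0 ≤ divOf f p
  /-- the `k`-space `I_E ⊆ R_E` of functions vanishing to order at least `E` -/
  VanishIdeal : (Point →₀ ℤ) → Submodule k F
  mem_VanishIdeal : ∀ (E : Point →₀ ℤ) (f : F),
    f ∈ VanishIdeal E ↔ f = 0 ∨ ∀ p ∈ E.support, E p ≤ divOf f p

namespace AbstractCurve

attribute [instance] fieldF algF

variable {k : Type} [Field k]

/-- The degree of a divisor. -/
def deg (C : AbstractCurve k) (D : C.Point →₀ ℤ) : ℤ := D.sum fun _ n => n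

/-- Linear equivalence of divisors: `D ~ D'` iff `D' = D + div f` for some `f ≠ 0`. -/
def LinEquiv (C : AbstractCurve k) (D D' : C.Point →₀ ℤ) : Prop :=
  ∃ f : C.F, f ≠ 0 ∧ D' = D + C.divOf f

/-- A `G`-form: a square matrix with entries in `L(G)`, all of whose 2×2 minors vanish,
and which is `k`-general.  (In context its size is `n = ½ deg G - g + 1`.) -/
def IsGForm (C : AbstractCurve k) (G : C.Point →₀ ℤ) {n : ℕ}
    (X : Matrix (Fin n) (Fin n) C.F) : Prop :=
  (∀ i j, X i j ∈ C.RR G) ∧ MinorsVanish X ∧ KGeneral k X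

/-- The `G`-form `X` represents the divisor `D` (of degree `½ deg G`): `X = u v` where
the entries of the column vector `u` form a `k`-basis of `L(D)` and the entries of the
row vector `v` form a `k`-basis of `L(G - D)`. -/
def Represents (C : AbstractCurve k) (G D : C.Point →₀ ℤ) {n : ℕ}
    (X : Matrix (Fin n) (Fin n) C.F) : Prop :=
  ∃ u v : Fin n → C.F,
    LinearIndependent k u ∧ Submodule.span k (Set.range u) = C.RR D ∧
    LinearIndependent k v ∧ Submodule.span k (Set.range v) = C.RR (G - D) ∧
    ∀ i j, X i j = u i * v j

/-- An `E`-compression functional `ρ : L(G) → k` (realized as a `k`-linear functional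
on the function field): `ρ` kills `L(G - E)`, and for every divisor `D` of degree
`½ deg G` the induced pairing `(a, b) ↦ ρ(ab)` on
`L(D)/L(D-E) × L(G-D)/L(G-D-E)` is a perfect pairing of `(deg E)`-dimensional
`k`-vector spaces (expressed by nondegeneracy on both sides together with both
quotients having dimension `deg E`). -/
def IsCompression (C : AbstractCurve k) (G E : C.Point →₀ ℤ) (ρ : C.F →ₗ[k] k) : Prop :=
  (∀ f ∈ C.RR (G - E), ρ f = 0) ∧
  ∀ D : C.Point →₀ ℤ, 2 * C.deg D = C.deg G →
    (∀ a ∈ C.RR D, (∀ b ∈ C.RR (G - D), ρ (a * b) = 0) → a ∈ C.RR (D - E)) ∧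
    (∀ b ∈ C.RR (G - D), (∀ a ∈ C.RR D, ρ (a * b) = 0) → b ∈ C.RR (G - D - E)) ∧
    (Module.finrank k
      (C.RR D ⧸ Submodule.comap (C.RR D).subtype (C.RR (D - E))) : ℤ) = C.deg E ∧
    (Module.finrank k
      (C.RR (G - D) ⧸
        Submodule.comap (C.RR (G - D)).subtype (C.RR (G - D - E))) : ℤ) = C.deg E

end AbstractCurve

/-!
`R_E / I_E` is exhibited as a monogenic algebra `k[a] / (∏ₚ (X - cₚ) ^ E p)`. Fix a point `q`
off the support of `E`. By Riemann–Roch, a generic element `a` of `L(N q)` takes distinct values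
`cₚ` at the points of `supp E`, with `a - cₚ` a uniformizer at `p`; counting zeros at these
points shows that no nonzero polynomial of degree `< deg E` in `a` lies in `I_E`. A second
Riemann–Roch count (`R_E = L(N q) + I_E` and `L(N q) ∩ I_E = L(N q - E)`) gives
`dim R_E / I_E = deg E`, so `1, a, …, a ^ (deg E - 1)` is a basis of `R_E / I_E`. The functional
`σ` reading off the coefficient of `a ^ (deg E - 1)` pairs perfectly: its Gram matrix
`σ (a ^ (i + j))` on this basis is anti-triangular with ones on the antidiagonal.
-/

theorem Multiset.sum_count_le_card {α : Type*} [DecidableEq α] (s : Finset α) (m : Multiset α) :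
    ∑ a ∈ s, m.count a ≤ Multiset.card m :=
  calc ∑ a ∈ s, m.count a ≤ ∑ a ∈ s ∪ m.toFinset, m.count a :=
        Finset.sum_le_sum_of_subset Finset.subset_union_left
    _ = Multiset.card m := Multiset.sum_count_eq_card fun a ha => by simp [ha]

theorem Submodule.mem_sup_span_one_iff {R A : Type*} [CommRing R] [Ring A] [Algebra R A]
    {W : Submodule R A} {f : A} :
    f ∈ W ⊔ span R {1} ↔ ∃ c : R, f - algebraMap R A c ∈ W := by
  simp only [Submodule.mem_sup, Submodule.mem_span_singleton]
  constructor
  · rintro ⟨w, hw, _, ⟨c, rfl⟩, rfl⟩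
    exact ⟨c, by simpa [Algebra.algebraMap_eq_smul_one] using hw⟩
  · rintro ⟨c, hc⟩
    exact ⟨_, hc, _, ⟨c, rfl⟩, by simp [Algebra.algebraMap_eq_smul_one]⟩

theorem Submodule.exists_mem_forall_notMem {K M ι : Type*} [Field K] [Infinite K]
    [AddCommGroup M] [Module K M] [Finite ι] (V : Submodule K M) (W : ι → Submodule K M)
    (h : ∀ i, ¬V ≤ W i) : ∃ x ∈ V, ∀ i, x ∉ W i := by
  by_contra! hcover
  obtain ⟨i, hi⟩ := Subspace.exists_eq_top_of_iUnion_eq_univ (p := fun i => (W i).comap V.subtype)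
    (Set.eq_univ_of_forall fun x => by simpa using hcover x x.2)
  exact h i fun x hx => by simpa using hi.ge (Submodule.mem_top (x := ⟨x, hx⟩))

open Polynomial in
theorem Module.End.linearIndependent_pow_apply {K V : Type*} [Field K]
    [AddCommGroup V] [Module K V] (T : Module.End K V) (v : V) (n : ℕ)
    (hv : ∀ P : K[X], P ≠ 0 → P.natDegree < n → aeval T P v ≠ 0) :
    LinearIndependent K fun i : Fin n => (T ^ (i : ℕ)) v := by
  refine Fintype.linearIndependent_iff.mpr fun γ hγ i => by_contra fun hγi => ?_
  set P := ∑ j : Fin n, C (γ j) * X ^ (j : ℕ)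
  have hcoeff : P.coeff i = γ i := by simp [P, Fin.val_inj]
  have hP : P ≠ 0 := fun h => hγi (by rw [← hcoeff, h, coeff_zero])
  refine hv P hP ((natDegree_lt_iff_degree_lt hP).mpr (degree_sum_fin_lt γ)) ?_
  simpa [P, map_sum, Algebra.smul_def] using hγ

open Polynomial in
theorem Module.End.exists_dual_forall_pow_apply_eq_zero_imp {K V : Type*} [Field K]
    [AddCommGroup V] [Module K V] [FiniteDimensional K V] (T : Module.End K V) (v : V)
    (hv : ∀ P : K[X], P ≠ 0 → P.natDegree < Module.finrank K V → aeval T P v ≠ 0) :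
    ∃ σ : Module.Dual K V, ∀ x, (∀ j : ℕ, σ ((T ^ j) x) = 0) → x = 0 := by
  set d := Module.finrank K V
  rcases Nat.eq_zero_or_pos d with hd | hd
  · have := Module.finrank_zero_iff.mp hd
    exact ⟨0, fun x _ => Subsingleton.elim x 0⟩
  have : Nonempty (Fin d) := ⟨⟨0, hd⟩⟩
  let b := basisOfLinearIndependentOfCardEqFinrank (T.linearIndependent_pow_apply v d hv)
    (by simp [d])
  have hb : ∀ i, b i = (T ^ (i : ℕ)) v := fun i => by simp [b]
  let last : Fin d := ⟨d - 1, by omega⟩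
  refine ⟨b.coord last, fun x hx => by_contra fun hx0 => ?_⟩
  have hsupp : (b.repr x).support.Nonempty := by simpa using hx0
  set i₀ := (b.repr x).support.max' hsupp
  have hi₀ : b.repr x i₀ ≠ 0 := Finsupp.mem_support_iff.mp ((b.repr x).support.max'_mem hsupp)
  have hmax : ∀ i, i₀ < i → b.repr x i = 0 := fun i hi => by_contra fun h =>
    hi.not_ge ((b.repr x).support.le_max' i (Finsupp.mem_support_iff.mpr h))
  -- the Gram matrix `σ (T ^ (i + j) v)` is anti-triangular with ones on the antidiagonal
  have hcoord : ∀ i ≤ i₀, b.coord last ((T ^ (d - 1 - i₀ + i)) v) = if i = i₀ then 1 else 0 :=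
    fun i hi => by
      have hi' : (i : ℕ) ≤ i₀ := hi
      have := i₀.isLt
      rw [← hb ⟨_, by omega⟩, Basis.coord_apply, Basis.repr_self, Finsupp.single_apply]
      simp only [last, Fin.ext_iff]
      split_ifs <;> first | rfl | (exfalso; omega)
  apply hi₀
  rw [← hx (d - 1 - i₀)]
  conv_rhs => rw [← b.sum_repr x]
  simp only [map_sum, map_smul, smul_eq_mul, hb, ← Module.End.mul_apply, ← pow_add]
  rw [Finset.sum_eq_single i₀ (fun i _ hi => ?_) (fun h => absurd (Finset.mem_univ i₀) h),
    hcoord i₀ le_rfl, if_pos rfl, mul_one]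
  rcases lt_or_gt_of_ne hi with hlt | hgt
  · rw [hcoord i hlt.le, if_neg hi, mul_zero]
  · rw [hmax i hgt, zero_mul]

namespace AbstractCurve

variable {k : Type} [Field k] (C : AbstractCurve k)

instance (D : C.Point →₀ ℤ) : Module.Finite k (C.RR D) := C.finite_RR D

lemma deg_eq_degree (D : C.Point →₀ ℤ) : C.deg D = D.degree := rfl

lemma deg_add (A B : C.Point →₀ ℤ) : C.deg (A + B) = C.deg A + C.deg B := by
  simp [deg_eq_degree]

lemma deg_sub (A B : C.Point →₀ ℤ) : C.deg (A - B) = C.deg A - C.deg B := by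
  simp [deg_eq_degree]

lemma deg_single (p : C.Point) (n : ℤ) : C.deg (Finsupp.single p n) = n := by
  simp [deg_eq_degree]

lemma deg_nonneg {D : C.Point →₀ ℤ} (hD : 0 ≤ D) : 0 ≤ C.deg D :=
  Finset.sum_nonneg fun p _ => hD p

lemma deg_mono {A B : C.Point →₀ ℤ} (h : A ≤ B) : C.deg A ≤ C.deg B := by
  simpa [deg_sub] using C.deg_nonneg (sub_nonneg.mpr h)

lemma deg_pos {E : C.Point →₀ ℤ} (hE : 0 ≤ E) (hE0 : E ≠ 0) : 0 < C.deg E := by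
  obtain ⟨p, hp⟩ := Finsupp.support_nonempty_iff.mpr hE0
  calc 0 < E p := lt_of_le_of_ne (hE p) (Ne.symm (Finsupp.mem_support_iff.mp hp))
    _ ≤ C.deg E := Finset.single_le_sum (fun r _ => hE r) hp

lemma finrank_RR {D : C.Point →₀ ℤ} (hD : 2 * (C.genus : ℤ) - 2 < C.deg D) :
    (Module.finrank k (C.RR D) : ℤ) = C.deg D - C.genus + 1 :=
  C.rank_RR D hD

lemma divOf_one : C.divOf 1 = 0 := by
  simpa using C.divOf_algebraMap 1 one_ne_zero

lemma divOf_smul {c : k} (hc : c ≠ 0) (f : C.F) : C.divOf (c • f) = C.divOf f := by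
  rcases eq_or_ne f 0 with rfl | hf
  · rw [smul_zero]
  · rw [Algebra.smul_def, C.divOf_mul _ _ (by simpa using hc) hf, C.divOf_algebraMap c hc,
      zero_add]

variable {C}

lemma mem_RR_iff {D : C.Point →₀ ℤ} {f : C.F} :
    f ∈ C.RR D ↔ f = 0 ∨ ∀ p, -D p ≤ C.divOf f p := by
  simp only [C.mem_RR, Finsupp.le_def, Finsupp.coe_zero, Pi.zero_apply, Finsupp.coe_add,
    Pi.add_apply, neg_le_iff_add_nonneg]

lemma RR_mono {A B : C.Point →₀ ℤ} (h : A ≤ B) : C.RR A ≤ C.RR B := fun f hf => by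
  rw [mem_RR_iff] at hf ⊢
  exact hf.imp_right fun hf p => (neg_le_neg (h p)).trans (hf p)

-- the ultrametric inequality, read off from `f + g ∈ L(-div f ⊔ -div g)`
lemma min_divOf_le_divOf_add {f g : C.F} (hf : f ≠ 0) (hg : g ≠ 0) (hfg : f + g ≠ 0)
    (p : C.Point) : min (C.divOf f p) (C.divOf g p) ≤ C.divOf (f + g) p := by
  have self_mem : ∀ {h : C.F}, h ≠ 0 → h ∈ C.RR (-C.divOf h) := fun _ =>
    mem_RR_iff.mpr (Or.inr fun p => by simp)
  have hsum : f + g ∈ C.RR (-C.divOf f ⊔ -C.divOf g) :=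
    add_mem (RR_mono le_sup_left (self_mem hf)) (RR_mono le_sup_right (self_mem hg))
  have := (mem_RR_iff.mp hsum).resolve_left hfg p
  simp only [Finsupp.sup_apply, Finsupp.neg_apply] at this
  omega

variable (C) in
def orderGE (p : C.Point) (n : ℤ) : Submodule k C.F where
  carrier := {f | f = 0 ∨ n ≤ C.divOf f p}
  zero_mem' := Or.inl rfl
  add_mem' {f g} hf hg := by
    by_cases hf0 : f = 0
    · simpa [hf0] using hg
    by_cases hg0 : g = 0
    · simpa [hg0] using hf
    by_cases hfg : f + g = 0
    · exact Or.inl hfg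
    exact Or.inr <| (le_min (hf.resolve_left hf0) (hg.resolve_left hg0)).trans
      (min_divOf_le_divOf_add hf0 hg0 hfg p)
  smul_mem' c f hf := by
    rcases eq_or_ne c 0 with rfl | hc
    · exact Or.inl (zero_smul k f)
    · rcases hf with rfl | hf
      · exact Or.inl (smul_zero c)
      · exact Or.inr (by rwa [C.divOf_smul hc])

lemma mem_orderGE {p : C.Point} {n : ℤ} {f : C.F} :
    f ∈ C.orderGE p n ↔ f = 0 ∨ n ≤ C.divOf f p := Iff.rfl

lemma orderGE_anti {p : C.Point} {m n : ℤ} (h : m ≤ n) : C.orderGE p n ≤ C.orderGE p m :=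
  fun _ hf => hf.imp_right h.trans

lemma orderGE_max (p : C.Point) (m n : ℤ) :
    C.orderGE p (max m n) = C.orderGE p m ⊓ C.orderGE p n := by
  ext f
  simp only [Submodule.mem_inf, mem_orderGE, max_le_iff]
  tauto

lemma mul_mem_orderGE {p : C.Point} {m n : ℤ} {f g : C.F} (hf : f ∈ C.orderGE p m)
    (hg : g ∈ C.orderGE p n) : f * g ∈ C.orderGE p (m + n) := by
  by_cases hf0 : f = 0
  · exact Or.inl (by simp [hf0])
  by_cases hg0 : g = 0
  · exact Or.inl (by simp [hg0])
  exact Or.inr <| by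
    rw [C.divOf_mul f g hf0 hg0, Finsupp.add_apply]
    exact add_le_add (hf.resolve_left hf0) (hg.resolve_left hg0)

lemma divOf_eq_of_mem_orderGE_of_notMem {p : C.Point} {n : ℤ} {f : C.F}
    (hn : f ∈ C.orderGE p n) (hn1 : f ∉ C.orderGE p (n + 1)) :
    f ≠ 0 ∧ C.divOf f p = n := by
  have hf : f ≠ 0 := fun h => hn1 (Or.inl h)
  exact ⟨hf, le_antisymm (by by_contra h; exact hn1 (Or.inr (by omega))) (hn.resolve_left hf)⟩

lemma algebraMap_mem_orderGE_zero (p : C.Point) (c : k) :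
    algebraMap k C.F c ∈ C.orderGE p 0 := by
  rcases eq_or_ne c 0 with rfl | hc
  · exact Or.inl (map_zero _)
  · exact Or.inr (by simp [C.divOf_algebraMap c hc])

lemma algebraMap_mem_orderGE_one_iff {p : C.Point} {c : k} :
    algebraMap k C.F c ∈ C.orderGE p 1 ↔ c = 0 := by
  refine ⟨fun h => by_contra fun hc => ?_, fun h => by simp [h, zero_mem]⟩
  have := h.resolve_left (by simpa using hc)
  simp [C.divOf_algebraMap c hc] at this

lemma one_notMem_orderGE_one (p : C.Point) : (1 : C.F) ∉ C.orderGE p 1 := by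
  simpa using (algebraMap_mem_orderGE_one_iff (c := (1 : k)) (p := p)).not.mpr one_ne_zero

lemma mem_of_mem_sup_span_one {p : C.Point} {W : Submodule k C.F} (hW : W ≤ C.orderGE p 1)
    {f : C.F} (hf : f ∈ C.orderGE p 1) (hfW : f ∈ W ⊔ Submodule.span k {1}) : f ∈ W := by
  have h := sup_inf_assoc_of_le (Submodule.span k {(1 : C.F)}) hW
  rw [((Submodule.disjoint_span_singleton' one_ne_zero).mpr (one_notMem_orderGE_one p)).symm.eq_bot,
    sup_bot_eq] at h
  exact h ▸ Submodule.mem_inf.mpr ⟨hfW, hf⟩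

variable (C) in
def IsUniformizer (p : C.Point) (t : C.F) : Prop :=
  t ∈ C.orderGE p 1 ∧ t ∉ C.orderGE p 2

lemma divOf_sub_algebraMap [DecidableEq k] {a : C.F} {p : C.Point} {c : k}
    (ha : C.IsUniformizer p (a - algebraMap k C.F c)) (r : k) :
    a - algebraMap k C.F r ≠ 0 ∧ C.divOf (a - algebraMap k C.F r) p = if r = c then 1 else 0 := by
  by_cases hr : r = c
  · subst hr
    simpa using divOf_eq_of_mem_orderGE_of_notMem ha.1 (by norm_num; exact ha.2)
  rw [if_neg hr]
  have hsplit : a - algebraMap k C.F r = (a - algebraMap k C.F c) + algebraMap k C.F (c - r) := by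
    rw [map_sub]; ring
  refine divOf_eq_of_mem_orderGE_of_notMem (hsplit ▸ add_mem (orderGE_anti zero_le_one ha.1)
    (algebraMap_mem_orderGE_zero p _)) fun h => hr ?_
  have := sub_mem (hsplit ▸ h) ha.1
  rw [add_sub_cancel_left, algebraMap_mem_orderGE_one_iff, sub_eq_zero] at this
  exact this.symm

lemma divOf_multiset_prod {s : Multiset C.F} (hs : ∀ f ∈ s, f ≠ 0) :
    C.divOf s.prod = (s.map C.divOf).sum := by
  induction s using Multiset.induction_on with
  | empty => simp [C.divOf_one]
  | cons f s ih =>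
    have hs' : ∀ g ∈ s, g ≠ 0 := fun g hg => hs g (Multiset.mem_cons_of_mem hg)
    rw [Multiset.prod_cons, C.divOf_mul _ _ (hs f (Multiset.mem_cons_self f s))
      (Multiset.prod_ne_zero fun h => hs' 0 h rfl), ih hs', Multiset.map_cons, Multiset.sum_cons]

lemma mem_RR_iff_forall {D : C.Point →₀ ℤ} {f : C.F} :
    f ∈ C.RR D ↔ ∀ p, f ∈ C.orderGE p (-D p) := by
  rw [mem_RR_iff]
  exact ⟨fun h p => h.imp_right (· p), fun h => or_iff_not_imp_left.mpr fun hf p =>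
    (h p).resolve_left hf⟩

lemma mem_Reg_iff {E : C.Point →₀ ℤ} {f : C.F} :
    f ∈ C.Reg E ↔ ∀ p ∈ E.support, f ∈ C.orderGE p 0 := by
  rw [C.mem_Reg]
  exact ⟨fun h p hp => h.imp_right (· p hp), fun h => or_iff_not_imp_left.mpr fun hf p hp =>
    (h p hp).resolve_left hf⟩

lemma mem_VanishIdeal_iff {E : C.Point →₀ ℤ} {f : C.F} :
    f ∈ C.VanishIdeal E ↔ ∀ p ∈ E.support, f ∈ C.orderGE p (E p) := by
  rw [C.mem_VanishIdeal]
  exact ⟨fun h p hp => h.imp_right (· p hp), fun h => or_iff_not_imp_left.mpr fun hf p hp =>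
    (h p hp).resolve_left hf⟩

section Reg

variable {E : C.Point →₀ ℤ}

lemma one_mem_Reg : (1 : C.F) ∈ C.Reg E :=
  mem_Reg_iff.mpr fun p _ => by simpa using algebraMap_mem_orderGE_zero p (1 : k)

lemma mul_mem_Reg {f g : C.F} (hf : f ∈ C.Reg E) (hg : g ∈ C.Reg E) : f * g ∈ C.Reg E :=
  mem_Reg_iff.mpr fun p hp => by
    simpa using mul_mem_orderGE (mem_Reg_iff.mp hf p hp) (mem_Reg_iff.mp hg p hp)

lemma pow_mem_Reg {f : C.F} (hf : f ∈ C.Reg E) (n : ℕ) : f ^ n ∈ C.Reg E := by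
  induction n with
  | zero => simpa using one_mem_Reg
  | succ n ih => simpa [pow_succ] using mul_mem_Reg ih hf

open Polynomial in
lemma aeval_mem_Reg {a : C.F} (ha : a ∈ C.Reg E) (P : k[X]) : aeval a P ∈ C.Reg E := by
  induction P using Polynomial.induction_on' with
  | add P Q hP hQ => simpa using add_mem hP hQ
  | monomial n c => simpa [aeval_monomial, ← Algebra.smul_def] using
      Submodule.smul_mem _ c (pow_mem_Reg ha n)

lemma mul_mem_VanishIdeal {f g : C.F} (hf : f ∈ C.VanishIdeal E) (hg : g ∈ C.Reg E) :
    f * g ∈ C.VanishIdeal E :=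
  mem_VanishIdeal_iff.mpr fun p hp => by
    simpa using mul_mem_orderGE (mem_VanishIdeal_iff.mp hf p hp) (mem_Reg_iff.mp hg p hp)

lemma VanishIdeal_le_Reg (hE : 0 ≤ E) : C.VanishIdeal E ≤ C.Reg E := fun _ hf =>
  mem_Reg_iff.mpr fun p hp => orderGE_anti (hE p) (mem_VanishIdeal_iff.mp hf p hp)

lemma RR_le_Reg {D : C.Point →₀ ℤ} (hD : ∀ p ∈ E.support, D p ≤ 0) : C.RR D ≤ C.Reg E :=
  fun _ hf => mem_Reg_iff.mpr fun p hp =>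
    orderGE_anti (by linarith [hD p hp]) (mem_RR_iff_forall.mp hf p)

lemma RR_le_VanishIdeal {D : C.Point →₀ ℤ} (hD : ∀ p ∈ E.support, D p ≤ -E p) :
    C.RR D ≤ C.VanishIdeal E :=
  fun _ hf => mem_VanishIdeal_iff.mpr fun p hp =>
    orderGE_anti (by linarith [hD p hp]) (mem_RR_iff_forall.mp hf p)

end Reg

lemma RR_inf (A B : C.Point →₀ ℤ) : C.RR A ⊓ C.RR B = C.RR (A ⊓ B) := by
  ext f
  simp only [Submodule.mem_inf, mem_RR_iff_forall, Finsupp.inf_apply, neg_inf, orderGE_max,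
    ← forall_and]

lemma RR_sub_single (D : C.Point →₀ ℤ) (p : C.Point) :
    C.RR (D - Finsupp.single p 1) = C.RR D ⊓ C.orderGE p (1 - D p) := by
  classical
  ext f
  simp only [Submodule.mem_inf, mem_RR_iff_forall, Finsupp.sub_apply, Finsupp.single_apply]
  constructor
  · intro h
    exact ⟨fun r => orderGE_anti (by split_ifs <;> omega) (h r), by simpa using h p⟩
  · rintro ⟨h, hp⟩ r
    split_ifs with hpr
    · subst hpr; simpa [add_comm] using hp
    · simpa using h r

lemma finrank_RR_sub_single {D : C.Point →₀ ℤ} (p : C.Point)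
    (hD : 2 * (C.genus : ℤ) - 2 < C.deg D - 1) :
    Module.finrank k (C.RR (D - Finsupp.single p 1)) + 1 = Module.finrank k (C.RR D) := by
  have h1 := C.finrank_RR (D := D) (by linarith)
  have h2 := C.finrank_RR (D := D - Finsupp.single p 1) (by rwa [C.deg_sub, C.deg_single])
  rw [C.deg_sub, C.deg_single] at h2
  omega

lemma exists_mem_RR_notMem_orderGE {D : C.Point →₀ ℤ} (p : C.Point)
    (hD : 2 * (C.genus : ℤ) - 2 < C.deg D - 1) :
    ∃ f ∈ C.RR D, f ∉ C.orderGE p (1 - D p) := by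
  by_contra! h
  have hle : C.RR D ≤ C.RR (D - Finsupp.single p 1) := fun f hf => by
    rw [RR_sub_single]
    exact ⟨hf, h f hf⟩
  have := Submodule.finrank_mono hle
  have := finrank_RR_sub_single p hD
  omega

-- in the nonspecial range `L(D - p)` has codimension one in `L(D)`
lemma RR_le_orderGE_sup_span {D : C.Point →₀ ℤ} {p : C.Point}
    (hD : 2 * (C.genus : ℤ) - 2 < C.deg D - 1) {f : C.F} (hf : f ∈ C.RR D)
    (hfp : f ∉ C.orderGE p (1 - D p)) :
    C.RR D ≤ C.orderGE p (1 - D p) ⊔ Submodule.span k {f} := by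
  have hfD : f ∉ C.RR (D - Finsupp.single p 1) := by
    rw [RR_sub_single]
    exact fun h => hfp h.2
  have hf0 : f ≠ 0 := fun h => hfD (h ▸ zero_mem _)
  have hle : C.RR (D - Finsupp.single p 1) ⊔ Submodule.span k {f} ≤ C.RR D :=
    sup_le (RR_mono (by simp)) ((Submodule.span_singleton_le_iff_mem _ _).mpr hf)
  have heq := Submodule.eq_of_le_of_finrank_le hle <| by
    have := Submodule.finrank_sup_add_finrank_inf_eq (C.RR (D - Finsupp.single p 1))
      (Submodule.span k {f})
    rw [((Submodule.disjoint_span_singleton' hf0).mpr hfD).eq_bot, finrank_bot,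
      finrank_span_singleton hf0] at this
    have := finrank_RR_sub_single p hD
    omega
  rw [← heq, RR_sub_single]
  exact sup_le_sup_right inf_le_right _

lemma RR_sup {A B : C.Point →₀ ℤ} (h : 2 * (C.genus : ℤ) - 2 < C.deg (A ⊓ B)) :
    C.RR A ⊔ C.RR B = C.RR (A ⊔ B) := by
  have hdeg : C.deg A + C.deg B = C.deg (A ⊓ B) + C.deg (A ⊔ B) := by
    rw [← C.deg_add, ← C.deg_add]
    congr 1
    ext p
    simp [min_add_max]
  have hA := C.finrank_RR (D := A) (h.trans_le (C.deg_mono inf_le_left))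
  have hB := C.finrank_RR (D := B) (h.trans_le (C.deg_mono inf_le_right))
  have hAB := C.finrank_RR (D := A ⊔ B) (h.trans_le (C.deg_mono (inf_le_left.trans le_sup_left)))
  have hAB' := C.finrank_RR h
  have := Submodule.finrank_sup_add_finrank_inf_eq (C.RR A) (C.RR B)
  rw [RR_inf] at this
  refine Submodule.eq_of_le_of_finrank_le (sup_le (RR_mono le_sup_left) (RR_mono le_sup_right)) ?_
  omega

lemma exists_pos_of_deg_eq_zero {D : C.Point →₀ ℤ} (hD : C.deg D = 0) (hD0 : D ≠ 0) :
    ∃ q, 0 < D q := by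
  by_contra! h
  exact hD0 <| Finsupp.ext fun q => by
    by_cases hq : q ∈ D.support
    · exact (Finset.sum_eq_zero_iff_of_nonpos fun r _ => h r).mp hD q hq
    · exact Finsupp.notMem_support_iff.mp hq

lemma exists_notMem_span_one (p : C.Point) : ∃ f : C.F, f ∉ Submodule.span k {1} := by
  by_contra! h
  set D := Finsupp.single p (2 * (C.genus : ℤ) + 1)
  have hle := Submodule.finrank_mono fun f (_ : f ∈ C.RR D) => h f
  have hrank := C.finrank_RR (D := D) (by rw [C.deg_single]; omega)
  rw [finrank_span_singleton one_ne_zero] at hle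
  rw [C.deg_single] at hrank
  omega

-- a nonconstant function with no zero in `S` has its zeros elsewhere
lemma exists_notMem_finset [Infinite k] (p : C.Point) (S : Finset C.Point) : ∃ q, q ∉ S := by
  obtain ⟨f, hf⟩ := exists_notMem_span_one p
  obtain ⟨g, -, hg⟩ := Submodule.exists_mem_forall_notMem ⊤
    (fun i : Option S => i.elim (Submodule.span k {1}) fun p => C.orderGE p 1) <| by
    rintro (_ | p) hle
    · exact hf (hle Submodule.mem_top)
    · exact one_notMem_orderGE_one p.1 (hle Submodule.mem_top)
  have hg0 : g ≠ 0 := fun h => hg none (h ▸ zero_mem _)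
  have hdiv : C.divOf g ≠ 0 := fun h => by
    obtain ⟨c, -, rfl⟩ := (C.divOf_eq_zero_iff g hg0).mp h
    exact hg none (Submodule.mem_span_singleton.mpr ⟨c, (Algebra.algebraMap_eq_smul_one c).symm⟩)
  obtain ⟨q, hq⟩ := exists_pos_of_deg_eq_zero (C.deg_divOf g hg0) hdiv
  exact ⟨q, fun hqS => hg (some ⟨q, hqS⟩) (Or.inr hq)⟩

instance infinite_point [Infinite k] [Nonempty C.Point] : Infinite C.Point :=
  ⟨fun _ => by
    have := Fintype.ofFinite C.Point
    obtain ⟨q, hq⟩ := exists_notMem_finset (Classical.arbitrary C.Point) Finset.univ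
    exact hq (Finset.mem_univ q)⟩

lemma exists_mem_RR_single_notMem_orderGE [DecidableEq C.Point] {q p p' : C.Point} (hp : p ≠ q)
    (hp' : p' ≠ q) {N : ℤ} (hN : 2 * (C.genus : ℤ) < N) :
    ∃ f ∈ C.RR (Finsupp.single q N), f ∈ C.orderGE p 1 ∧
      f ∉ C.orderGE p' (if p' = p then 2 else 1) := by
  obtain ⟨f, hf, hfp'⟩ := exists_mem_RR_notMem_orderGE
    (D := Finsupp.single q N - Finsupp.single p 1) p'
    (by rw [C.deg_sub, C.deg_single, C.deg_single]; omega)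
  refine ⟨f, RR_mono (by simp) hf, ?_, ?_⟩
  · have := mem_RR_iff_forall.mp hf p
    rwa [Finsupp.sub_apply, Finsupp.single_eq_of_ne hp, Finsupp.single_eq_same, zero_sub,
      neg_neg] at this
  · have hD : 1 - (Finsupp.single q N - Finsupp.single p 1 : C.Point →₀ ℤ) p' =
        if p' = p then 2 else 1 := by
      rw [Finsupp.sub_apply, Finsupp.single_eq_of_ne hp']
      rcases eq_or_ne p' p with rfl | h
      · simp
      · simp [h, Finsupp.single_eq_of_ne h]
    rwa [hD] at hfp'

lemma RR_single_le_orderGE_one_sup_span_one {q p : C.Point} (hp : p ≠ q) {N : ℤ}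
    (hN : 2 * (C.genus : ℤ) < N) :
    C.RR (Finsupp.single q N) ≤ C.orderGE p 1 ⊔ Submodule.span k {1} := by
  have hone : (1 : C.F) ∈ C.RR (Finsupp.single q N) :=
    RR_mono (Finsupp.single_nonneg.mpr (by omega))
      (mem_RR_iff.mpr (Or.inr fun r => by simp [C.divOf_one]))
  simpa [Finsupp.single_eq_of_ne hp] using RR_le_orderGE_sup_span (p := p)
    (by rw [C.deg_single]; omega) hone
    (by simpa [Finsupp.single_eq_of_ne hp] using one_notMem_orderGE_one p)

-- `a` is a generic element of `L(N q)`: avoiding `orderGE p 2 + k` makes `a - cₚ` a uniformizer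
-- at `p`, and avoiding `orderGE p 1 ⊓ orderGE p' 1 + k` forces `cₚ ≠ cₚ'`
theorem exists_forall_isUniformizer_sub [Infinite k] {E : C.Point →₀ ℤ} {q : C.Point}
    (hq : q ∉ E.support) :
    ∃ a ∈ C.Reg E, ∃ c : C.Point → k, Set.InjOn c E.support ∧
      ∀ p ∈ E.support, C.IsUniformizer p (a - algebraMap k C.F (c p)) := by
  classical
  set N : ℤ := 2 * C.genus + 1
  have hne : ∀ p ∈ E.support, p ≠ q := fun p hp h => hq (h ▸ hp)
  have hsingle : ∀ p ∈ E.support, Finsupp.single q N p = 0 := fun p hp =>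
    Finsupp.single_eq_of_ne (hne p hp)
  let W : E.support ⊕ {x : E.support × E.support // x.1 ≠ x.2} → Submodule k C.F
    | .inl p => C.orderGE p 2 ⊔ Submodule.span k {1}
    | .inr x => C.orderGE x.1.1 1 ⊓ C.orderGE x.1.2 1 ⊔ Submodule.span k {1}
  obtain ⟨a, haV, ha⟩ := Submodule.exists_mem_forall_notMem (C.RR (Finsupp.single q N)) W <| by
    rintro (⟨p, hp⟩ | ⟨⟨⟨p, hp⟩, ⟨p', hp'⟩⟩, hpp'⟩) hle
    · obtain ⟨f, hfV, hf1, hf2⟩ := exists_mem_RR_single_notMem_orderGE (hne p hp) (hne p hp)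
        (N := N) (by omega)
      rw [if_pos rfl] at hf2
      exact hf2 (mem_of_mem_sup_span_one (orderGE_anti (by norm_num)) hf1 (hle hfV))
    · have hpp : p' ≠ p := fun h => hpp' (Subtype.ext h.symm)
      obtain ⟨f, hfV, hf1, hf2⟩ := exists_mem_RR_single_notMem_orderGE (hne p hp) (hne p' hp')
        (N := N) (by omega)
      rw [if_neg hpp] at hf2
      exact hf2 (mem_of_mem_sup_span_one inf_le_left hf1 (hle hfV)).2
  have hc : ∀ p, ∃ c : k, p ∈ E.support → a - algebraMap k C.F c ∈ C.orderGE p 1 := fun p => by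
    by_cases hp : p ∈ E.support
    · obtain ⟨c, hc⟩ := Submodule.mem_sup_span_one_iff.mp
        (RR_single_le_orderGE_one_sup_span_one (hne p hp) (N := N) (by omega) haV)
      exact ⟨c, fun _ => hc⟩
    · exact ⟨0, fun h => absurd h hp⟩
  choose c hc using hc
  refine ⟨a, RR_le_Reg (fun p hp => (hsingle p hp).le) haV, c, ?_, fun p hp => ⟨hc p hp, ?_⟩⟩
  · intro p hp p' hp' hcc
    by_contra hpp'
    exact ha (.inr ⟨(⟨p, hp⟩, ⟨p', hp'⟩), fun h => hpp' (congrArg Subtype.val h)⟩)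
      (Submodule.mem_sup_span_one_iff.mpr ⟨c p, ⟨hc p hp, hcc ▸ hc p' hp'⟩⟩)
  · exact fun h => ha (.inl ⟨p, hp⟩) (Submodule.mem_sup_span_one_iff.mpr ⟨c p, h⟩)

open Polynomial in
lemma divOf_aeval [IsAlgClosed k] [DecidableEq k] {a : C.F} {p : C.Point} {c : k}
    (ha : C.IsUniformizer p (a - algebraMap k C.F c)) {P : k[X]} (hP : P ≠ 0) :
    aeval a P ≠ 0 ∧ C.divOf (aeval a P) p = P.roots.count c := by
  have hfactor : ∀ f ∈ P.roots.map fun r => a - algebraMap k C.F r, f ≠ 0 := by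
    simp only [Multiset.mem_map]
    rintro _ ⟨r, -, rfl⟩
    exact (divOf_sub_algebraMap ha r).1
  have hprod := Multiset.prod_ne_zero fun h => hfactor 0 h rfl
  have hsplit : aeval a P = algebraMap k C.F P.leadingCoeff *
      (P.roots.map fun r => a - algebraMap k C.F r).prod := by
    conv_lhs => rw [(IsAlgClosed.splits P).eq_prod_roots]
    rw [map_mul, aeval_C, map_multiset_prod, Multiset.map_map]
    simp
  have hlc : algebraMap k C.F P.leadingCoeff ≠ 0 := by simpa using hP
  refine ⟨hsplit ▸ mul_ne_zero hlc hprod, ?_⟩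
  rw [hsplit, C.divOf_mul _ _ hlc hprod, C.divOf_algebraMap _ (by simpa using hP), zero_add,
    divOf_multiset_prod hfactor, ← Finsupp.applyAddHom_apply, map_multiset_sum,
    Multiset.map_map, Multiset.map_map]
  simp only [Function.comp_apply, Finsupp.applyAddHom_apply, (divOf_sub_algebraMap ha _).2]
  induction P.roots using Multiset.induction_on with
  | empty => simp
  | cons r s ih => by_cases h : r = c <;> simp [h, ih, Ne.symm, add_comm]

open Polynomial in
theorem aeval_notMem_VanishIdeal [IsAlgClosed k] {E : C.Point →₀ ℤ} {a : C.F}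
    {c : C.Point → k} (hc : Set.InjOn c E.support)
    (ha : ∀ p ∈ E.support, C.IsUniformizer p (a - algebraMap k C.F (c p)))
    {P : k[X]} (hP : P ≠ 0) (hdeg : (P.natDegree : ℤ) < C.deg E) :
    aeval a P ∉ C.VanishIdeal E := by
  classical
  intro hmem
  have hle : ∀ p ∈ E.support, E p ≤ P.roots.count (c p) := fun p hp =>
    (divOf_aeval (ha p hp) hP).2 ▸
      (mem_VanishIdeal_iff.mp hmem p hp).resolve_left (divOf_aeval (ha p hp) hP).1
  have : C.deg E ≤ P.natDegree :=
    calc C.deg E = ∑ p ∈ E.support, E p := rfl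
      _ ≤ ∑ p ∈ E.support, (P.roots.count (c p) : ℤ) := Finset.sum_le_sum hle
      _ = ∑ r ∈ E.support.image c, (P.roots.count r : ℤ) :=
        (Finset.sum_image (f := fun r => (P.roots.count r : ℤ)) hc).symm
      _ ≤ Multiset.card P.roots := by exact_mod_cast Multiset.sum_count_le_card _ _
      _ ≤ P.natDegree := by exact_mod_cast P.card_roots'
  omega

lemma RR_inf_VanishIdeal {E D : C.Point →₀ ℤ} (hE : 0 ≤ E) (hD : ∀ p ∈ E.support, D p = 0) :
    C.RR D ⊓ C.VanishIdeal E = C.RR (D - E) := by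
  refine le_antisymm (fun f ⟨hfD, hfE⟩ => mem_RR_iff_forall.mpr fun r => ?_)
    (le_inf (RR_mono (sub_le_self D hE)) (RR_le_VanishIdeal fun p hp => by simp [hD p hp]))
  by_cases hr : r ∈ E.support
  · simpa [hD r hr] using mem_VanishIdeal_iff.mp hfE r hr
  · simpa [Finsupp.notMem_support_iff.mp hr] using mem_RR_iff_forall.mp hfD r

theorem Reg_eq_RR_sup_VanishIdeal {E : C.Point →₀ ℤ} (hE : 0 ≤ E) {q : C.Point}
    (hq : q ∉ E.support) {N : ℤ} (hN : 2 * (C.genus : ℤ) - 2 + C.deg E < N) :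
    C.Reg E = C.RR (Finsupp.single q N) ⊔ C.VanishIdeal E := by
  have hsingle : ∀ p ∈ E.support, Finsupp.single q N p = 0 := fun p hp =>
    Finsupp.single_eq_of_ne fun h => hq (h ▸ hp)
  refine le_antisymm (fun f hf => ?_)
    (sup_le (RR_le_Reg fun p hp => (hsingle p hp).le) (VanishIdeal_le_Reg hE))
  rcases eq_or_ne f 0 with rfl | hf0
  · exact zero_mem _
  -- `f ∈ L(P)` with `P = 0` on `supp E`, and `L(P) ≤ L(A) + L(P - E)` by Riemann–Roch
  set A := Finsupp.single q N
  set P := -C.divOf f ⊔ A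
  have hP : ∀ p ∈ E.support, P p = 0 := fun p hp => by
    have := (mem_Reg_iff.mp hf p hp).resolve_left hf0
    simp [P, A, hsingle p hp, this]
  have hfP : f ∈ C.RR P := RR_mono le_sup_left (mem_RR_iff.mpr (Or.inr fun p => by simp))
  have hPAB : P ≤ A ⊔ (P - E) := fun r => by
    by_cases hr : r ∈ E.support
    · simp [hP r hr, hsingle r hr, A]
    · simp [Finsupp.notMem_support_iff.mp hr]
  have hAB : 2 * (C.genus : ℤ) - 2 < C.deg (A ⊓ (P - E)) := by
    refine lt_of_lt_of_le ?_ (C.deg_mono (le_inf (sub_le_self A hE)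
      (sub_le_sub_right (le_sup_right : A ≤ P) E)))
    rw [C.deg_sub, C.deg_single]
    omega
  have hf' : f ∈ C.RR A ⊔ C.RR (P - E) := (RR_sup hAB).symm ▸ RR_mono hPAB hfP
  exact sup_le_sup_left (RR_le_VanishIdeal fun p hp => by simp [hP p hp]) _ hf'

theorem finrank_Reg_quotient {E : C.Point →₀ ℤ} (hE : 0 ≤ E) {q : C.Point}
    (hq : q ∉ E.support) :
    (Module.finrank k (C.Reg E ⧸ (C.VanishIdeal E).comap (C.Reg E).subtype) : ℤ) = C.deg E := by
  obtain ⟨N, hN⟩ : ∃ N : ℤ, N = 2 * C.genus + C.deg E := ⟨_, rfl⟩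
  set L := C.RR (Finsupp.single q N)
  have hLE : L ⊓ C.VanishIdeal E = C.RR (Finsupp.single q N - E) :=
    RR_inf_VanishIdeal hE fun p hp => Finsupp.single_eq_of_ne fun h => hq (h ▸ hp)
  rw [Reg_eq_RR_sup_VanishIdeal hE hq (N := N) (by omega),
    ← (LinearMap.quotientInfEquivSupQuotient L (C.VanishIdeal E)).finrank_eq,
    ← Submodule.comap_inf, hLE]
  have hquot := Submodule.finrank_quotient_add_finrank
    ((C.RR (Finsupp.single q N - E)).comap L.subtype)
  rw [(Submodule.comapSubtypeEquivOfLe (RR_mono (sub_le_self _ hE))).finrank_eq] at hquot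
  have hdeg := C.deg_nonneg hE
  have hL : (Module.finrank k L : ℤ) = N - C.genus + 1 := by
    simpa [C.deg_single] using C.finrank_RR (D := Finsupp.single q N) (by rw [C.deg_single]; omega)
  have hLE' := C.finrank_RR (D := Finsupp.single q N - E) (by rw [C.deg_sub, C.deg_single]; omega)
  rw [C.deg_sub, C.deg_single] at hLE'
  omega

section mulQuot

variable {E : C.Point →₀ ℤ} {a : C.F}

def mulQuot (ha : a ∈ C.Reg E) :
    Module.End k (C.Reg E ⧸ (C.VanishIdeal E).comap (C.Reg E).subtype) :=
  Submodule.mapQ _ _ ((LinearMap.mulRight k a).restrict fun _ hx => mul_mem_Reg hx ha)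
    fun _ hx => mul_mem_VanishIdeal hx ha

lemma mulQuot_mk (ha : a ∈ C.Reg E) (x : C.Reg E) :
    mulQuot ha (Submodule.Quotient.mk x) =
      Submodule.Quotient.mk ⟨x * a, mul_mem_Reg x.2 ha⟩ :=
  rfl

lemma mulQuot_pow_mk (ha : a ∈ C.Reg E) (n : ℕ) (x : C.Reg E) :
    (mulQuot ha ^ n) (Submodule.Quotient.mk x) =
      Submodule.Quotient.mk ⟨x * a ^ n, mul_mem_Reg x.2 (pow_mem_Reg ha n)⟩ := by
  induction n generalizing x with
  | zero => simp
  | succ n ih =>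
    rw [pow_succ, Module.End.mul_apply, mulQuot_mk, ih]
    simp only [pow_succ', mul_assoc]

open Polynomial in
lemma aeval_mulQuot_apply_one (ha : a ∈ C.Reg E) (P : k[X]) :
    aeval (mulQuot ha) P (Submodule.Quotient.mk ⟨1, one_mem_Reg⟩) =
      Submodule.Quotient.mk ⟨aeval a P, aeval_mem_Reg ha P⟩ := by
  induction P using Polynomial.induction_on' with
  | add P Q hP hQ =>
    rw [map_add, LinearMap.add_apply, hP, hQ, ← Submodule.Quotient.mk_add]
    exact congrArg _ (Subtype.ext (map_add _ P Q).symm)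
  | monomial n c =>
    rw [aeval_monomial, Module.End.mul_apply, Module.algebraMap_end_apply, mulQuot_pow_mk,
      ← Submodule.Quotient.mk_smul]
    exact congrArg _ (Subtype.ext (by simp [Algebra.smul_def]))

open Polynomial in
theorem exists_functional_of_aeval_notMem (hE : 0 ≤ E) (ha : a ∈ C.Reg E)
    [FiniteDimensional k (C.Reg E ⧸ (C.VanishIdeal E).comap (C.Reg E).subtype)]
    (hP : ∀ P : k[X], P ≠ 0 →
      P.natDegree < Module.finrank k (C.Reg E ⧸ (C.VanishIdeal E).comap (C.Reg E).subtype) →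
      aeval a P ∉ C.VanishIdeal E) :
    ∃ σ : C.F →ₗ[k] k, (∀ f ∈ C.VanishIdeal E, σ f = 0) ∧
      ∀ x ∈ C.Reg E, (∀ j : ℕ, σ (x * a ^ j) = 0) → x ∈ C.VanishIdeal E := by
  set I := (C.VanishIdeal E).comap (C.Reg E).subtype
  obtain ⟨σQ, hσQ⟩ := (mulQuot ha).exists_dual_forall_pow_apply_eq_zero_imp
    (Submodule.Quotient.mk ⟨1, one_mem_Reg⟩) fun P hP0 hdeg h => hP P hP0 hdeg <| by
      rwa [aeval_mulQuot_apply_one, Submodule.Quotient.mk_eq_zero] at h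
  obtain ⟨S, hS⟩ := (C.Reg E).exists_isCompl
  let σ := σQ ∘ₗ I.mkQ ∘ₗ (C.Reg E).projectionOnto S hS
  have hσ : ∀ x (hx : x ∈ C.Reg E), σ x = σQ (Submodule.Quotient.mk ⟨x, hx⟩) := fun x hx => by
    simp only [σ, LinearMap.comp_apply, Submodule.projectionOnto_apply_left hS ⟨x, hx⟩,
      Submodule.mkQ_apply]
  refine ⟨σ, fun f hf => ?_, fun x hx h => ?_⟩
  · rw [hσ f (VanishIdeal_le_Reg hE hf), (Submodule.Quotient.mk_eq_zero I).mpr hf, map_zero]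
  · refine (Submodule.Quotient.mk_eq_zero I (x := ⟨x, hx⟩)).mp (hσQ _ fun j => ?_)
    rw [mulQuot_pow_mk, ← hσ]
    exact h j

end mulQuot

end AbstractCurve

open AbstractCurve in
/-- Let `E` be a nonzero effective divisor, `R_E` the ring of
rational functions regular in a neighborhood of the support of `E`, and `I_E ⊆ R_E`
the ideal of functions vanishing to order at least `E`.  There exists a `k`-linear
functional `σ` on `R_E` (realized as a `k`-linear functional on the function field)
factoring through `R_E / I_E` such that the induced bilinear map
`(a, b) ↦ σ(ab)` on `R_E / I_E × R_E / I_E` is a perfect pairing of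
`(deg E)`-dimensional `k`-vector spaces. -/
theorem compression_pairing_exists (k : Type) [Field k] [IsAlgClosed k]
    (C : AbstractCurve k) (E : C.Point →₀ ℤ) (hE : 0 ≤ E) (hE0 : E ≠ 0) :
    ∃ σ : C.F →ₗ[k] k,
      (∀ f ∈ C.VanishIdeal E, σ f = 0) ∧
      (∀ a ∈ C.Reg E, (∀ b ∈ C.Reg E, σ (a * b) = 0) → a ∈ C.VanishIdeal E) ∧
      (∀ b ∈ C.Reg E, (∀ a ∈ C.Reg E, σ (a * b) = 0) → b ∈ C.VanishIdeal E) ∧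
      (Module.finrank k
        (C.Reg E ⧸ Submodule.comap (C.Reg E).subtype (C.VanishIdeal E)) : ℤ) =
        C.deg E := by
  obtain ⟨p, -⟩ := Finsupp.support_nonempty_iff.mpr hE0
  have : Nonempty C.Point := ⟨p⟩
  obtain ⟨q, hq⟩ := Infinite.exists_notMem_finset E.support
  have hdim := finrank_Reg_quotient hE hq
  have : FiniteDimensional k (C.Reg E ⧸ (C.VanishIdeal E).comap (C.Reg E).subtype) :=
    Module.finite_of_finrank_pos (by have := C.deg_pos hE hE0; omega)
  obtain ⟨a, ha, c, hc, hac⟩ := exists_forall_isUniformizer_sub hq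
  obtain ⟨σ, hσI, hσ⟩ := exists_functional_of_aeval_notMem hE ha fun P hP hdeg =>
    aeval_notMem_VanishIdeal hc hac hP (by omega)
  refine ⟨σ, hσI, fun x hx hx' => hσ x hx fun j => hx' _ (pow_mem_Reg ha j),
    fun y hy hy' => hσ y hy fun j => ?_, hdim⟩
  rw [mul_comm]
  exact hy' _ (pow_mem_Reg ha j)
end

section
/- Let G and E be divisors on C with deg G ≡ 0 (mod 2), E > 0, and ½·deg G − deg E ≥ 2g; put n = ½·deg G − deg E − g + 1 and n' = ½·deg G − g + 1 = n + deg E. Let ρ : L(G) → k be an E-compression functional, let D be a divisor of degree ½·deg G, and let X be a G-form representing D. Then there exist n' × n' permutation matrices P and Q such that in the block decomposition PXQ = [[a, b], [c, d]], with a of size deg E × deg E and d of size n × n, the matrix ρa (obtained from the block a by applying ρ entrywise) has nonzero determinant. -/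
/-- View an `N × N` matrix, `N = e + n`, as a block matrix indexed by `Fin e ⊕ Fin n`
(upper-left block of size `e × e`, lower-right block of size `n × n`). -/
def asBlocks {R : Type} {N e n : ℕ} (h : N = e + n)
    (M : Matrix (Fin N) (Fin N) R) : Matrix (Fin e ⊕ Fin n) (Fin e ⊕ Fin n) R :=
  M.submatrix (fun p => (finCongr h.symm) (finSumFinEquiv p))
    (fun p => (finCongr h.symm) (finSumFinEquiv p))

/-- Given a block decomposition `[[a, b], [c, d]]` of `M` (with `N = e + n`), the
compressed block
`z` from `[[w, x], [y, z]] = [[1, 0], [-(ρc)(ρa)⁻¹, 1]] · [[a, b], [c, d]] · [[1, -(ρa)⁻¹(ρb)], [0, 1]]`,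
where `ρ` is applied entrywise to the blocks `a`, `b`, `c`. -/
noncomputable def compressedBlock {k : Type} [Field k] {F : Type} [Field F] [Algebra k F]
    {N e n : ℕ} (h : N = e + n) (M : Matrix (Fin N) (Fin N) F) (ρ : F →ₗ[k] k) :
    Matrix (Fin n) (Fin n) F :=
  let B := asBlocks h M
  let a := B.toBlocks₁₁
  let b := B.toBlocks₁₂
  let c := B.toBlocks₂₁
  ((Matrix.fromBlocks 1 0 (-(c.map ρ * (a.map ρ)⁻¹)) 1).map (algebraMap k F) * B *
    (Matrix.fromBlocks 1 (-((a.map ρ)⁻¹ * b.map ρ)) 0 1).map (algebraMap k F)).toBlocks₂₂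

/-!
The pairing matrix `(ρ (uᵢ vⱼ))` has rank `deg E`: its rows are the images of the basis `u`
of `L(D)` under `a ↦ (ρ (a vⱼ))ⱼ`, a map whose kernel on `L(D)` is exactly `L(D - E)` (one
inclusion because `ρ` kills `L(G - E)`, the other by nondegeneracy of the compression pairing),
and `L(D) / L(D - E)` has dimension `deg E`. A matrix of rank `e` has a nonsingular `e × e`
minor, and row and column permutations move it to the upper left corner.
-/

namespace Matrix

theorem injective_of_det_submatrix_ne_zero {R m n o : Type*} [CommRing R] [Fintype o]
    [DecidableEq o] {A : Matrix m n R} {f : o → m} {g : o → n}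
    (h : (A.submatrix f g).det ≠ 0) : Function.Injective f ∧ Function.Injective g := by
  refine ⟨fun i j hij => ?_, fun i j hij => ?_⟩ <;> by_contra hne <;> apply h
  · exact det_zero_of_row_eq hne (by ext; simp [hij])
  · exact det_zero_of_column_eq hne (by simp [hij])

variable {K m n : Type*} [Field K] [Fintype m] [Fintype n]

theorem exists_linearIndependent_row_submatrix_of_rank_eq {A : Matrix m n K} {r : ℕ}
    (hA : A.rank = r) : ∃ f : Fin r → m, LinearIndependent K (A.submatrix f id).row := by
  obtain ⟨κ, a, ha, hspan, hli⟩ := exists_linearIndependent' K A.row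
  have : Finite κ := Finite.of_injective a ha
  have : Fintype κ := Fintype.ofFinite κ
  have hcard : Fintype.card κ = r := by
    rw [← hA, rank_eq_finrank_span_row, ← hspan, finrank_span_eq_card hli]
  let e := Fintype.equivFinOfCardEq hcard
  exact ⟨a ∘ e.symm, hli.comp _ e.symm.injective⟩

theorem exists_det_submatrix_ne_zero_of_rank_eq {A : Matrix m n K} {r : ℕ}
    (hA : A.rank = r) : ∃ (f : Fin r → m) (g : Fin r → n), (A.submatrix f g).det ≠ 0 := by
  obtain ⟨f, hf⟩ := exists_linearIndependent_row_submatrix_of_rank_eq hA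
  have hrank : (A.submatrix f id)ᵀ.rank = r := by
    rw [rank_transpose, hf.rank_matrix, Fintype.card_fin]
  obtain ⟨g, hg⟩ := exists_linearIndependent_row_submatrix_of_rank_eq hrank
  have hunit : IsUnit (A.submatrix f g)ᵀ := linearIndependent_rows_iff_isUnit.mp hg
  exact ⟨f, g, det_transpose (A.submatrix f g) ▸ ((isUnit_iff_isUnit_det _).mp hunit).ne_zero⟩

end Matrix

theorem exists_perm_asBlocks_toBlocks₁₁_eq {R : Type} {N e n : ℕ} (h : N = e + n)
    (M : Matrix (Fin N) (Fin N) R) {f g : Fin e → Fin N} (hf : Function.Injective f)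
    (hg : Function.Injective g) :
    ∃ σ τ : Equiv.Perm (Fin N),
      (asBlocks h (M.submatrix σ τ)).toBlocks₁₁ = M.submatrix f g := by
  let corner : Fin e → Fin N := fun i => Fin.cast h.symm (Fin.castAdd n i)
  have hcorner : Function.Injective corner := fun i j hij => by simpa [corner] using hij
  obtain ⟨σ, hσ⟩ := Equiv.Perm.exists_extending_pair corner f hcorner hf
  obtain ⟨τ, hτ⟩ := Equiv.Perm.exists_extending_pair corner g hcorner hg
  refine ⟨σ, τ, ?_⟩
  ext i j
  exact congrArg₂ M (hσ i) (hτ j)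

def mulPairing {k F κ : Type*} [Field k] [CommRing F] [Algebra k F] (ρ : F →ₗ[k] k)
    (v : κ → F) : F →ₗ[k] κ → k :=
  LinearMap.pi fun j => ρ ∘ₗ LinearMap.mulRight k (v j)

@[simp]
theorem mulPairing_apply {k F κ : Type*} [Field k] [CommRing F] [Algebra k F]
    (ρ : F →ₗ[k] k) (v : κ → F) (a : F) (j : κ) : mulPairing ρ v a j = ρ (a * v j) :=
  rfl

namespace AbstractCurve

variable {k : Type} [Field k] (C : AbstractCurve k)

theorem mul_mem_RR {A B : C.Point →₀ ℤ} {x y : C.F} (hx : x ∈ C.RR A) (hy : y ∈ C.RR B) :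
    x * y ∈ C.RR (A + B) := by
  rcases eq_or_ne x 0 with rfl | hx0
  · simp
  rcases eq_or_ne y 0 with rfl | hy0
  · simp
  have hx' := ((C.mem_RR A x).mp hx).resolve_left hx0
  have hy' := ((C.mem_RR B y).mp hy).resolve_left hy0
  refine (C.mem_RR _ _).mpr (Or.inr ?_)
  rw [C.divOf_mul x y hx0 hy0]
  calc (0 : C.Point →₀ ℤ) = 0 + 0 := (add_zero 0).symm
    _ ≤ (C.divOf x + A) + (C.divOf y + B) := add_le_add hx' hy'
    _ = C.divOf x + C.divOf y + (A + B) := by abel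

variable {C} {G E D : C.Point →₀ ℤ} {ρ : C.F →ₗ[k] k} {κ : Type*} {v : κ → C.F}

theorem IsCompression.ker_mulPairing_restrict (hρ : C.IsCompression G E ρ)
    (hD : 2 * C.deg D = C.deg G)
    (hv : Submodule.span k (Set.range v) = C.RR (G - D)) :
    LinearMap.ker (mulPairing ρ v ∘ₗ (C.RR D).subtype) =
      (C.RR (D - E)).comap (C.RR D).subtype := by
  ext ⟨a, ha⟩
  simp only [LinearMap.mem_ker, LinearMap.comp_apply, Submodule.subtype_apply,
    Submodule.mem_comap, funext_iff, mulPairing_apply, Pi.zero_apply]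
  constructor
  · intro hav
    refine (hρ.2 D hD).1 a ha fun b hb => ?_
    have hspan : C.RR (G - D) ≤ LinearMap.ker (ρ ∘ₗ LinearMap.mulLeft k a) := by
      rw [← hv, Submodule.span_le]
      rintro _ ⟨j, rfl⟩
      exact hav j
    exact hspan hb
  · intro haE j
    have hvj : v j ∈ C.RR (G - D) := hv ▸ Submodule.subset_span ⟨j, rfl⟩
    apply hρ.1
    simpa [sub_add_sub_cancel'] using C.mul_mem_RR haE hvj

theorem IsCompression.rank_pairingMatrix_eq_deg [Fintype κ] (hρ : C.IsCompression G E ρ)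
    (hD : 2 * C.deg D = C.deg G) {ι : Type*} [Fintype ι] {u : ι → C.F}
    (hu : Submodule.span k (Set.range u) = C.RR D)
    (hv : Submodule.span k (Set.range v) = C.RR (G - D)) :
    ((Matrix.of fun i j => ρ (u i * v j)).rank : ℤ) = C.deg E := by
  have hrows : (Matrix.of fun i j => ρ (u i * v j)).row = mulPairing ρ v ∘ u := rfl
  have hrange : Submodule.span k (Set.range (mulPairing ρ v ∘ u)) =
      LinearMap.range (mulPairing ρ v ∘ₗ (C.RR D).subtype) := by
    rw [Set.range_comp, ← Submodule.map_span, hu, LinearMap.range_comp, Submodule.range_subtype]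
  rw [Matrix.rank_eq_finrank_span_row, hrows, hrange,
    ← (mulPairing ρ v ∘ₗ (C.RR D).subtype).quotKerEquivRange.finrank_eq,
    hρ.ker_mulPairing_restrict hD hv]
  exact (hρ.2 D hD).2.2.1

end AbstractCurve

open AbstractCurve in
theorem compression_block_det_ne_zero_general (k : Type) [Field k]
    (C : AbstractCurve k) (G E : C.Point →₀ ℤ) (s : ℤ)
    (hG : C.deg G = 2 * s)
    (e n n' : ℕ) (he : (e : ℤ) = C.deg E)
    (hn' : n' = e + n)
    (ρ : C.F →ₗ[k] k) (hρ : C.IsCompression G E ρ)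
    (D : C.Point →₀ ℤ) (hD : C.deg D = s)
    (X : Matrix (Fin n') (Fin n') C.F) (hXD : C.Represents G D X) :
    ∃ σ τ : Equiv.Perm (Fin n'),
      ((asBlocks hn' (X.submatrix σ τ)).toBlocks₁₁.map ρ).det ≠ 0 := by
  obtain ⟨u, v, -, hu, -, hv, hXuv⟩ := hXD
  have hrank : (Matrix.of fun i j => ρ (u i * v j)).rank = e := by
    have := hρ.rank_pairingMatrix_eq_deg (by rw [hD, hG]) hu hv
    omega
  obtain ⟨f, g, hdet⟩ := Matrix.exists_det_submatrix_ne_zero_of_rank_eq hrank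
  obtain ⟨hf, hg⟩ := Matrix.injective_of_det_submatrix_ne_zero hdet
  obtain ⟨σ, τ, hblock⟩ := exists_perm_asBlocks_toBlocks₁₁_eq hn' X hf hg
  refine ⟨σ, τ, ?_⟩
  have hX : X = Matrix.of fun i j => u i * v j := Matrix.ext hXuv
  rwa [hblock, hX]

open AbstractCurve in
/-- Let `G`, `E` be divisors with `deg G = 2s` even, `E > 0`, and
`s - deg E ≥ 2g`; put `n = s - deg E - g + 1` and `n' = s - g + 1 = n + deg E`.  Let
`ρ : L(G) → k` be an `E`-compression functional, `D` a divisor of degree `s`, and `X` a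
`G`-form representing `D`.  Then there exist `n' × n'` permutation matrices `P`, `Q`
such that, in the block decomposition `P X Q = [[a, b], [c, d]]` with `a` of size
`deg E × deg E` and `d` of size `n × n`, the matrix `ρ a` (apply `ρ` entrywise) has
nonzero determinant. -/
theorem compression_block_det_ne_zero (k : Type) [Field k] [IsAlgClosed k]
    (C : AbstractCurve k) (G E : C.Point →₀ ℤ) (s : ℤ)
    (hG : C.deg G = 2 * s) (hE : 0 ≤ E) (hE0 : E ≠ 0)
    (hge : 2 * (C.genus : ℤ) ≤ s - C.deg E)
    (e n n' : ℕ) (he : (e : ℤ) = C.deg E)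
    (hn : (n : ℤ) = s - C.deg E - C.genus + 1) (hn' : n' = e + n)
    (ρ : C.F →ₗ[k] k) (hρ : C.IsCompression G E ρ)
    (D : C.Point →₀ ℤ) (hD : C.deg D = s)
    (X : Matrix (Fin n') (Fin n') C.F) (hX : C.IsGForm G X) (hXD : C.Represents G D X) :
    ∃ σ τ : Equiv.Perm (Fin n'),
      ((asBlocks hn' (X.submatrix σ τ)).toBlocks₁₁.map ρ).det ≠ 0 :=
  compression_block_det_ne_zero_general k C G E s hG e n n' he hn' ρ hρ D hD X hXD
end
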